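/- Let N ≥ 5, α = 4/(N-4), 2* = 2N/(N-4), β* = 2N²/((N-2)(N-4)), β = 2N²/(N²-2N+8), γ = 2(N-2)/(N-4), ρ = 2N(N-2)/(N²-4N+8), T > 0. For every u ∈ L^∞((0,T), Ḣ²(ℝ^N)) ∩ L^γ((0,T), Ḣ^{2,ρ}(ℝ^N)): ‖ |u|^α u ‖_{L²((0,T), L^{2N/(N-2)})} ≤ C_Sob^{α+1} ‖Δu‖_{L^∞((0,T), L²)}^{2/(N-4)} ‖Δu‖_{L^γ((0,T), L^ρ)}^{(N-2)/(N-4)}, where C_Sob is a Sobolev constant such that ‖w‖_{L^{β*}} ≤ C_Sob ‖Δw‖_{L^β}. -/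

import Mathlib

open MeasureTheory ENNReal

/-- The mixed space-time norm `‖u‖_{L^q(μ, L^r(ℝ^N))}` of `u : ℝ → ℝ^N → ℂ`. -/
noncomputable def mixedNorm {N : ℕ} (q r : ℝ≥0∞) (μ : Measure ℝ)
    (u : ℝ → (Fin N → ℝ) → ℂ) : ℝ≥0∞ :=
  if q = ∞ then essSup (fun t => eLpNorm (u t) r volume) μ
  else (∫⁻ t, (eLpNorm (u t) r volume) ^ q.toReal ∂μ) ^ (1 / q.toReal)

/-- `α = 4/(N-4)` -/
noncomputable def alphaExp (N : ℕ) : ℝ := 4 / ((N : ℝ) - 4)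
/-- `γ = 2(N-2)/(N-4)` -/
noncomputable def gammaExp (N : ℕ) : ℝ := 2 * ((N : ℝ) - 2) / ((N : ℝ) - 4)
/-- `ρ = 2N(N-2)/(N²-4N+8)` -/
noncomputable def rhoExp (N : ℕ) : ℝ :=
  2 * (N : ℝ) * ((N : ℝ) - 2) / ((N : ℝ) ^ 2 - 4 * (N : ℝ) + 8)
/-- `β = 2N²/(N²-2N+8)` -/
noncomputable def betaExp (N : ℕ) : ℝ :=
  2 * (N : ℝ) ^ 2 / ((N : ℝ) ^ 2 - 2 * (N : ℝ) + 8)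
/-- `β* = 2N²/((N-2)(N-4))` -/
noncomputable def betaStarExp (N : ℕ) : ℝ :=
  2 * (N : ℝ) ^ 2 / (((N : ℝ) - 2) * ((N : ℝ) - 4))

lemma eLpNorm_interp {α : Type*} [MeasurableSpace α] (μ : Measure α) (f : α → ℂ)
    (hf : AEMeasurable f μ) {p q r θ : ℝ} (hp : 0 < p) (hq : 0 < q) (hr0 : 0 < r)
    (hθ : 0 < θ) (hθ1 : θ < 1)
    (hr : 1 / r = θ / p + (1 - θ) / q) :
    eLpNorm f (ENNReal.ofReal r) μ ≤
      eLpNorm f (ENNReal.ofReal p) μ ^ θ * eLpNorm f (ENNReal.ofReal q) μ ^ (1 - θ) := by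
  have hrθ : 0 < r * θ := by positivity
  have h1θ : 0 < 1 - θ := by linarith
  have hr1θ : 0 < r * (1 - θ) := by positivity
  set P := p / (r * θ) with hP
  set Q := q / (r * (1 - θ)) with hQ
  have hrθp : r * θ < p := by
    have h1 : θ / p < 1 / r := by
      rw [hr]
      have : 0 < (1 - θ) / q := div_pos h1θ hq
      linarith
    have := (div_lt_div_iff₀ hp hr0).mp h1
    nlinarith
  have hPQ : P.HolderConjugate Q := by
    rw [Real.holderConjugate_iff]; constructor
    · rw [hP, lt_div_iff₀ hrθ]; linarith
    · rw [hP, hQ, inv_div, inv_div]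
      have : r * θ / p + r * (1 - θ) / q = r * (θ / p + (1 - θ) / q) := by ring
      rw [this, ← hr]
      field_simp
  set g : α → ℝ≥0∞ := fun x => (‖f x‖₊ : ℝ≥0∞) with hgdef
  have hg : AEMeasurable g μ := hf.enorm
  have hH := ENNReal.lintegral_mul_le_Lp_mul_Lq μ hPQ (hg.pow_const (r * θ))
      (hg.pow_const (r * (1 - θ)))
  have e1 : ∀ x, ((fun x => g x ^ (r * θ)) * fun x => g x ^ (r * (1 - θ))) x = g x ^ r := by
    intro x
    rw [Pi.mul_apply, ← ENNReal.rpow_add_of_nonneg _ _ hrθ.le hr1θ.le]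
    congr 1; ring
  have e2 : ∀ x, (g x ^ (r * θ)) ^ P = g x ^ p := by
    intro x
    rw [← ENNReal.rpow_mul]
    congr 1; rw [hP]; field_simp
  have e3 : ∀ x, (g x ^ (r * (1 - θ))) ^ Q = g x ^ q := by
    intro x
    rw [← ENNReal.rpow_mul]
    congr 1; rw [hQ]; field_simp
  simp only [e1] at hH
  simp only [e2, e3] at hH
  have key : (∫⁻ x, g x ^ r ∂μ) ^ (1 / r) ≤
      ((∫⁻ x, g x ^ p ∂μ) ^ (1 / P) * (∫⁻ x, g x ^ q ∂μ) ^ (1 / Q)) ^ (1 / r) :=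
    ENNReal.rpow_le_rpow hH (by positivity)
  rw [ENNReal.mul_rpow_of_nonneg _ _ (by positivity : (0:ℝ) ≤ 1 / r),
    ← ENNReal.rpow_mul, ← ENNReal.rpow_mul] at key
  have eP : 1 / P * (1 / r) = θ / p := by rw [hP]; field_simp
  have eQ : 1 / Q * (1 / r) = (1 - θ) / q := by rw [hQ]; field_simp
  rw [eP, eQ] at key
  have norm_eq : ∀ s : ℝ, 0 < s →
      eLpNorm f (ENNReal.ofReal s) μ = (∫⁻ x, g x ^ s ∂μ) ^ (1 / s) := by
    intro s hs
    rw [eLpNorm_eq_lintegral_rpow_enorm_toReal (by simp [hs.not_ge]) (by simp),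
      ENNReal.toReal_ofReal hs.le]
    rfl
  rw [norm_eq r hr0, norm_eq p hp, norm_eq q hq, ← ENNReal.rpow_mul, ← ENNReal.rpow_mul]
  rw [show 1 / p * θ = θ / p by ring, show 1 / q * (1 - θ) = (1 - θ) / q by ring]
  exact key


/-- For `N ≥ 5`, `α = 4/(N-4)` and `T > 0`: if
`u ∈ L^∞((0,T), Ḣ²(ℝ^N)) ∩ L^γ((0,T), Ḣ^{2,ρ}(ℝ^N))` with Laplacian `Lu` (encoded through
the Sobolev inequality `‖u(t)‖_{L^{β*}} ≤ C_Sob ‖Δu(t)‖_{L^β}`), then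
`‖ |u|^α u ‖_{L²((0,T), L^{2N/(N-2)})} ≤ C_Sob^{α+1} ‖Δu‖_{L^∞((0,T),L²)}^{2/(N-4)}
  ‖Δu‖_{L^γ((0,T),L^ρ)}^{(N-2)/(N-4)}`. -/
theorem nonlinearity_strichartz_dual_estimate (N : ℕ) (hN : 5 ≤ N) (T : ℝ) (hT : 0 < T)
    (C : ℝ) (hC : 0 ≤ C) (u Lu : ℝ → (Fin N → ℝ) → ℂ)
    (hum : Measurable (Function.uncurry u)) (hLum : Measurable (Function.uncurry Lu))
    (hSob : ∀ t : ℝ, eLpNorm (u t) (ENNReal.ofReal (betaStarExp N)) volume ≤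
      ENNReal.ofReal C * eLpNorm (Lu t) (ENNReal.ofReal (betaExp N)) volume)
    (hLinf : mixedNorm ∞ 2 (volume.restrict (Set.Ioo 0 T)) Lu ≠ ∞)
    (hLgr : mixedNorm (ENNReal.ofReal (gammaExp N)) (ENNReal.ofReal (rhoExp N))
      (volume.restrict (Set.Ioo 0 T)) Lu ≠ ∞) :
    mixedNorm 2 (ENNReal.ofReal (2 * (N : ℝ) / ((N : ℝ) - 2)))
        (volume.restrict (Set.Ioo 0 T))
        (fun t x => (‖u t x‖ ^ alphaExp N : ℝ) • u t x) ≤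
      ENNReal.ofReal C ^ (alphaExp N + 1) *
        mixedNorm ∞ 2 (volume.restrict (Set.Ioo 0 T)) Lu ^ (2 / ((N : ℝ) - 4)) *
        mixedNorm (ENNReal.ofReal (gammaExp N)) (ENNReal.ofReal (rhoExp N))
          (volume.restrict (Set.Ioo 0 T)) Lu ^ (((N : ℝ) - 2) / ((N : ℝ) - 4)) := by
  have hn : (5:ℝ) ≤ (N:ℝ) := by exact_mod_cast hN
  set n : ℝ := (N:ℝ) with hdefn
  have h4 : (0:ℝ) < n - 4 := by linarith
  have h2 : (0:ℝ) < n - 2 := by linarith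
  have hn0 : (0:ℝ) < n := by linarith
  have hρd : (0:ℝ) < n^2 - 4*n + 8 := by nlinarith
  have hβd : (0:ℝ) < n^2 - 2*n + 8 := by nlinarith
  set μ := volume.restrict (Set.Ioo (0:ℝ) T) with hμ
  set rr : ℝ := 2 * n / (n - 2) with hrr
  have hrpos : 0 < rr := by positivity
  have hα : alphaExp N = 4 / (n - 4) := rfl
  have hαpos : 0 < alphaExp N := by rw [hα]; positivity
  have hα1 : alphaExp N + 1 = n / (n - 4) := by rw [hα]; field_simp; ring
  have hα1pos : 0 < alphaExp N + 1 := by linarith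
  have hρpos : 0 < rhoExp N := by unfold rhoExp; rw [← hdefn]; positivity
  have hβpos : 0 < betaExp N := by unfold betaExp; rw [← hdefn]; positivity
  have hγ : gammaExp N = 2 * (n - 2) / (n - 4) := rfl
  have hγpos : 0 < gammaExp N := by rw [hγ]; positivity
  -- notation
  set a : ℝ → ℝ≥0∞ := fun t => eLpNorm (Lu t) 2 volume with ha
  set b : ℝ → ℝ≥0∞ := fun t => eLpNorm (Lu t) (ENNReal.ofReal (rhoExp N)) volume with hb
  set C' : ℝ≥0∞ := ENNReal.ofReal C with hC'
  have hC'top : C' ≠ ∞ := ENNReal.ofReal_ne_top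
  -- A and B
  have hAeq : mixedNorm ∞ 2 μ Lu = essSup a μ := by rw [mixedNorm, if_pos rfl]
  set A : ℝ≥0∞ := essSup a μ with hA
  have hAtop : A ≠ ∞ := by rw [← hAeq]; exact hLinf
  have hBeq : mixedNorm (ENNReal.ofReal (gammaExp N)) (ENNReal.ofReal (rhoExp N)) μ Lu
      = (∫⁻ t, b t ^ gammaExp N ∂μ) ^ (1 / gammaExp N) := by
    rw [mixedNorm, if_neg (by simp), ENNReal.toReal_ofReal hγpos.le]
  -- pointwise estimate
  have hstep : ∀ t : ℝ,
      eLpNorm (fun x => (‖u t x‖ ^ alphaExp N : ℝ) • u t x)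
        (ENNReal.ofReal (2 * n / (n - 2))) volume ≤
      C' ^ (alphaExp N + 1) * a t ^ (2 / (n - 4)) * b t ^ ((n - 2) / (n - 4)) := by
    intro t
    have heq1 : eLpNorm (fun x => (‖u t x‖ ^ alphaExp N : ℝ) • u t x)
        (ENNReal.ofReal rr) volume
        = eLpNorm (u t) (ENNReal.ofReal (betaStarExp N)) volume ^ (alphaExp N + 1) := by
      have hnorm : (fun x => ‖(‖u t x‖ ^ alphaExp N : ℝ) • u t x‖)
          = fun x => ‖u t x‖ ^ (alphaExp N + 1) := by
        funext x
        rw [norm_smul, Real.norm_eq_abs,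
          abs_of_nonneg (Real.rpow_nonneg (norm_nonneg _) _),
          Real.rpow_add' (norm_nonneg _) (by linarith), Real.rpow_one]
      calc eLpNorm (fun x => (‖u t x‖ ^ alphaExp N : ℝ) • u t x) (ENNReal.ofReal rr) volume
          = eLpNorm (fun x => ‖u t x‖ ^ (alphaExp N + 1)) (ENNReal.ofReal rr) volume := by
            rw [← eLpNorm_norm (fun x => (‖u t x‖ ^ alphaExp N : ℝ) • u t x), hnorm]
        _ = eLpNorm (u t) (ENNReal.ofReal rr * ENNReal.ofReal (alphaExp N + 1)) volume
              ^ (alphaExp N + 1) := eLpNorm_norm_rpow _ hα1pos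
        _ = eLpNorm (u t) (ENNReal.ofReal (betaStarExp N)) volume ^ (alphaExp N + 1) := by
            rw [← ENNReal.ofReal_mul hrpos.le]
            congr 2
            rw [hrr, hα1]
            unfold betaStarExp; rw [← hdefn]; field_simp
    rw [heq1]
    -- Sobolev
    have hsb := hSob t
    -- interpolation
    have hinterp : eLpNorm (Lu t) (ENNReal.ofReal (betaExp N)) volume ≤
        a t ^ (2 / n) * b t ^ (1 - 2 / n) := by
      have hmeas : AEMeasurable (Lu t) volume :=
        (hLum.of_uncurry_left).aemeasurable
      have h2n : (0:ℝ) < 2 / n := by positivity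
      have h2n1 : 2 / n < 1 := by rw [div_lt_one hn0]; linarith
      have hrel : 1 / betaExp N = (2 / n) / 2 + (1 - 2 / n) / rhoExp N := by
        unfold betaExp rhoExp; rw [← hdefn]
        field_simp
        ring
      have := eLpNorm_interp volume (Lu t) hmeas (by norm_num : (0:ℝ) < 2)
        hρpos hβpos h2n h2n1 hrel
      simpa [ha, hb, ENNReal.ofReal_ofNat] using this
    calc eLpNorm (u t) (ENNReal.ofReal (betaStarExp N)) volume ^ (alphaExp N + 1)
        ≤ (C' * eLpNorm (Lu t) (ENNReal.ofReal (betaExp N)) volume) ^ (alphaExp N + 1) :=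
          ENNReal.rpow_le_rpow hsb hα1pos.le
      _ ≤ (C' * (a t ^ (2 / n) * b t ^ (1 - 2 / n))) ^ (alphaExp N + 1) :=
          ENNReal.rpow_le_rpow (mul_le_mul_right hinterp _) hα1pos.le
      _ = C' ^ (alphaExp N + 1) * a t ^ (2 / (n - 4)) * b t ^ ((n - 2) / (n - 4)) := by
          have eθ : 2 / n * (alphaExp N + 1) = 2 / (n - 4) := by
            rw [hα1]; field_simp; try ring
          have e1θ : (1 - 2 / n) * (alphaExp N + 1) = (n - 2) / (n - 4) := by
            rw [hα1]; field_simp; try ring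
          rw [ENNReal.mul_rpow_of_nonneg _ _ hα1pos.le,
            ENNReal.mul_rpow_of_nonneg _ _ hα1pos.le,
            ← ENNReal.rpow_mul, ← ENNReal.rpow_mul, eθ, e1θ, ← mul_assoc]
  -- now the time integral
  have hmix : mixedNorm 2 (ENNReal.ofReal (2 * n / (n - 2))) μ
      (fun t x => (‖u t x‖ ^ alphaExp N : ℝ) • u t x)
      = (∫⁻ t, eLpNorm (fun x => (‖u t x‖ ^ alphaExp N : ℝ) • u t x)
          (ENNReal.ofReal (2 * n / (n - 2))) volume ^ (2:ℝ) ∂μ) ^ (1 / (2:ℝ)) := by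
    rw [mixedNorm, if_neg (by norm_num)]
    norm_num
  rw [hmix, hAeq, hBeq]
  set K : ℝ≥0∞ := C' ^ (2 * (alphaExp N + 1)) * A ^ (4 / (n - 4)) with hK
  have hae : ∀ᵐ t ∂μ, eLpNorm (fun x => (‖u t x‖ ^ alphaExp N : ℝ) • u t x)
      (ENNReal.ofReal (2 * n / (n - 2))) volume ^ (2:ℝ) ≤ K * b t ^ gammaExp N := by
    filter_upwards [ENNReal.ae_le_essSup (μ := μ) a] with t hta
    calc eLpNorm (fun x => (‖u t x‖ ^ alphaExp N : ℝ) • u t x)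
          (ENNReal.ofReal (2 * n / (n - 2))) volume ^ (2:ℝ)
        ≤ (C' ^ (alphaExp N + 1) * a t ^ (2 / (n - 4)) * b t ^ ((n - 2) / (n - 4))) ^ (2:ℝ) :=
          ENNReal.rpow_le_rpow (hstep t) (by norm_num)
      _ = C' ^ (2 * (alphaExp N + 1)) * a t ^ (4 / (n - 4)) * b t ^ gammaExp N := by
          have eC : (alphaExp N + 1) * 2 = 2 * (alphaExp N + 1) := by ring
          have ea : 2 / (n - 4) * 2 = 4 / (n - 4) := by ring
          have eb : (n - 2) / (n - 4) * 2 = gammaExp N := by rw [hγ]; ring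
          rw [ENNReal.mul_rpow_of_nonneg _ _ (by norm_num : (0:ℝ) ≤ 2),
            ENNReal.mul_rpow_of_nonneg _ _ (by norm_num : (0:ℝ) ≤ 2),
            ← ENNReal.rpow_mul, ← ENNReal.rpow_mul, ← ENNReal.rpow_mul, eC, ea, eb]
      _ ≤ K * b t ^ gammaExp N := by
          rw [hK]
          gcongr
  have hint : (∫⁻ t, eLpNorm (fun x => (‖u t x‖ ^ alphaExp N : ℝ) • u t x)
      (ENNReal.ofReal (2 * n / (n - 2))) volume ^ (2:ℝ) ∂μ)
      ≤ K * ∫⁻ t, b t ^ gammaExp N ∂μ := by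
    calc _ ≤ ∫⁻ t, K * b t ^ gammaExp N ∂μ := lintegral_mono_ae hae
      _ = K * ∫⁻ t, b t ^ gammaExp N ∂μ := by
          rw [lintegral_const_mul' _ _ ?_]
          rw [hK]
          exact ENNReal.mul_ne_top (ENNReal.rpow_ne_top_of_nonneg (by positivity) hC'top)
            (ENNReal.rpow_ne_top_of_nonneg (by positivity) hAtop)
  calc (∫⁻ t, eLpNorm (fun x => (‖u t x‖ ^ alphaExp N : ℝ) • u t x)
        (ENNReal.ofReal (2 * n / (n - 2))) volume ^ (2:ℝ) ∂μ) ^ (1 / (2:ℝ))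
      ≤ (K * ∫⁻ t, b t ^ gammaExp N ∂μ) ^ (1 / (2:ℝ)) :=
        ENNReal.rpow_le_rpow hint (by norm_num)
    _ = C' ^ (alphaExp N + 1) * A ^ (2 / (n - 4)) *
        ((∫⁻ t, b t ^ gammaExp N ∂μ) ^ (1 / gammaExp N)) ^ ((n - 2) / (n - 4)) := by
        have eK1 : 2 * (alphaExp N + 1) * (1 / 2) = alphaExp N + 1 := by ring
        have eK2 : 4 / (n - 4) * (1 / 2) = 2 / (n - 4) := by ring
        have eB : 1 / gammaExp N * ((n - 2) / (n - 4)) = 1 / 2 := by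
          rw [hγ]; field_simp
        have hI : (∫⁻ t, b t ^ gammaExp N ∂μ) ^ ((1:ℝ) / 2)
            = ((∫⁻ t, b t ^ gammaExp N ∂μ) ^ (1 / gammaExp N)) ^ ((n - 2) / (n - 4)) := by
          rw [← ENNReal.rpow_mul, eB]
        rw [hK, ENNReal.mul_rpow_of_nonneg _ _ (by norm_num : (0:ℝ) ≤ 1/2),
          ENNReal.mul_rpow_of_nonneg _ _ (by norm_num : (0:ℝ) ≤ 1/2),
          ← ENNReal.rpow_mul, ← ENNReal.rpow_mul, eK1, eK2, hI]
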